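/- Suppose the distribution u = Σ_{k=0}^{M} α_k δ^{(k)}(v) (finite linear combination of derivatives of the Dirac delta, with α_M ≠ 0) is annihilated by the ordinary differential operator Q_σ = -(iσ+1)∂_v - v∂_v² + [2(iσ+2)v∂_v + 2v²∂_v² + (iσ+1) + λ] + [-(iσ+3)v²∂_v - v³∂_v² - (iσ+1)v] for some complex σ and real λ. Then iσ = M+1, i.e., σ = -i(M+1). -/
import Mathlib


open Finset

/-- Formal adjoint of the differential operator
`Q_σ = -(iσ+1)∂_v - v∂_v² + 2(iσ+2)v∂_v + 2v²∂_v² + (iσ+1) + λ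
        - (iσ+3)v²∂_v - v³∂_v² - (iσ+1)v`,
written as `Q_σ = c₂(v)∂_v² + c₁(v)∂_v + c₀(v)` with
`c₂(v) = -v + 2v² - v³`, `c₁(v) = -(iσ+1) + 2(iσ+2)v - (iσ+3)v²`,
`c₀(v) = (iσ+1) + λ - (iσ+1)v`, acting on a test function `φ` by
`Qᵗφ = (c₂φ)'' - (c₁φ)' + c₀φ`, so that `⟨Q_σ u, φ⟩ = ⟨u, Qᵗφ⟩`. -/
noncomputable def Qt (σ : ℂ) (lam : ℝ) (φ : ℝ → ℂ) : ℝ → ℂ := fun v =>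
  deriv (deriv (fun w : ℝ => (-(w:ℂ) + 2*(w:ℂ)^2 - (w:ℂ)^3) * φ w)) v
  - deriv (fun w : ℝ =>
      (-(Complex.I*σ+1) + 2*(Complex.I*σ+2)*(w:ℂ) - (Complex.I*σ+3)*(w:ℂ)^2) * φ w) v
  + ((Complex.I*σ+1) + (lam:ℂ) - (Complex.I*σ+1)*(v:ℂ)) * φ v

open Polynomial

open Polynomial

-- smoothness of real-evaluated complex polynomial
lemma contDiff_evalReal (p : ℂ[X]) : ContDiff ℝ (⊤ : ℕ∞) (fun v : ℝ => p.eval (v:ℂ)) := by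
  induction p using Polynomial.induction_on' with
  | add p q hp hq => simpa [eval_add] using hp.add hq
  | monomial n a =>
      simp only [eval_monomial]
      exact contDiff_const.mul ((Complex.ofRealCLM.contDiff).pow n)

lemma deriv_evalReal (p : ℂ[X]) :
    deriv (fun w : ℝ => p.eval (w:ℂ)) = fun v : ℝ => (derivative p).eval (v:ℂ) := by
  funext v
  exact ((p.hasDerivAt (v:ℂ)).comp_ofReal).deriv

lemma iteratedDeriv_evalReal (p : ℂ[X]) (k : ℕ) :
    iteratedDeriv k (fun w : ℝ => p.eval (w:ℂ))
      = fun v : ℝ => (derivative^[k] p).eval (v:ℂ) := by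
  induction k generalizing p with
  | zero => simp
  | succ n ih =>
      rw [iteratedDeriv_succ', deriv_evalReal, ih, Function.iterate_succ_apply]

noncomputable def Qpoly (A : ℂ) (lam : ℝ) (M : ℕ) : ℂ[X] :=
  derivative (derivative (-X^(M+2) + C 2 * X^(M+3) - X^(M+4)))
  - derivative (C (-A) * X^(M+1) + C (2*(A+1)) * X^(M+2) + C (-(A+2)) * X^(M+3))
  + (C (A + lam) * X^(M+1) + C (-A) * X^(M+2))

lemma eval_iter_Qpoly (A : ℂ) (lam : ℝ) (M k : ℕ) (hk : k ≤ M) :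
    (derivative^[k] (Qpoly A lam M)).eval 0
      = if k = M then -((Nat.factorial (M+2)) : ℂ) + A * (Nat.factorial (M+1)) else 0 := by
  have h2 : derivative^[k] (derivative (derivative
      (-X^(M+2) + C (2:ℂ) * X^(M+3) - X^(M+4))))
      = derivative^[k+2] (-X^(M+2) + C (2:ℂ) * X^(M+3) - X^(M+4)) := by
    rw [show k + 2 = k + 1 + 1 from rfl, Function.iterate_succ_apply,
      Function.iterate_succ_apply]
  have h1 : derivative^[k] (derivative
      (C (-A) * X^(M+1) + C (2*(A+1)) * X^(M+2) + C (-(A+2)) * X^(M+3)))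
      = derivative^[k+1] (C (-A) * X^(M+1) + C (2*(A+1)) * X^(M+2) + C (-(A+2)) * X^(M+3)) := by
    rw [Function.iterate_succ_apply]
  simp only [Qpoly, iterate_derivative_sub, iterate_map_add, h2, h1,
    iterate_derivative_C_mul, iterate_derivative_neg,
    iterate_derivative_X_pow_eq_C_mul, eval_add, eval_sub, eval_neg, eval_mul,
    eval_C, eval_pow, eval_X]
  rcases eq_or_lt_of_le hk with rfl | hlt
  · have f1 : k - k = 0 := by omega
    have f2 : k + 1 - k = 1 := by omega
    have f3 : k + 2 - k = 2 := by omega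
    have f4 : k + 1 - (k+1) = 0 := by omega
    have f5 : k + 2 - (k+1) = 1 := by omega
    have f6 : k + 3 - (k+1) = 2 := by omega
    have f7 : k + 2 - (k+2) = 0 := by omega
    have f8 : k + 3 - (k+2) = 1 := by omega
    have f9 : k + 4 - (k+2) = 2 := by omega
    simp only [f1, f2, f3, f4, f5, f6, f7, f8, f9, pow_zero, pow_one, zero_pow,
      one_ne_zero, Ne, not_false_iff, mul_zero, zero_mul, mul_one, if_pos rfl,
      Nat.descFactorial_self, add_zero, zero_add, OfNat.ofNat_ne_zero]
    have d1 : 2 * (k+2).descFactorial k = (k+2) * ((k+1) * k.factorial) := by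
      have h := Nat.factorial_mul_descFactorial (Nat.le_add_right k 2)
      have h2 : k + 2 - k = 2 := by omega
      rw [h2] at h
      simpa [Nat.factorial] using h
    have d2 : (k+1).descFactorial k = (k+1) * k.factorial := by
      have h := Nat.factorial_mul_descFactorial (Nat.le_add_right k 1)
      have h2 : k + 1 - k = 1 := by omega
      rw [h2] at h
      simpa [Nat.factorial] using h
    have c1 := congrArg (Nat.cast : ℕ → ℂ) d1
    have c2 := congrArg (Nat.cast : ℕ → ℂ) d2
    push_cast at c1 c2
    push_cast
    ring_nf
  · have e0 : M - k ≠ 0 := by omega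
    have e1 : M + 2 - (k + 2) ≠ 0 := by omega
    have e2 : M + 3 - (k + 2) ≠ 0 := by omega
    have e3 : M + 4 - (k + 2) ≠ 0 := by omega
    have e4 : M + 1 - (k + 1) ≠ 0 := by omega
    have e5 : M + 2 - (k + 1) ≠ 0 := by omega
    have e6 : M + 3 - (k + 1) ≠ 0 := by omega
    have e7 : M + 1 - k ≠ 0 := by omega
    have e8 : M + 2 - k ≠ 0 := by omega
    simp [zero_pow, e0, e1, e2, e3, e4, e5, e6, e7, e8, Nat.ne_of_lt hlt]

/-- If the distribution `u = Σ_{k=0}^{M} α_k δ^{(k)}(v)` (with `α_M ≠ 0`, pairing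
`⟨δ^{(k)}, φ⟩ = (-1)^k φ^{(k)}(0)`) is annihilated by `Q_σ`, then `iσ = M+1`,
i.e. `σ = -i(M+1)`. -/
theorem annihilated_implies_sigma (M : ℕ) (σ : ℂ) (lam : ℝ) (α : ℕ → ℂ)
    (hαM : α M ≠ 0)
    (hQ : ∀ φ : ℝ → ℂ, ContDiff ℝ (⊤ : ℕ∞) φ →
      ∑ k ∈ Finset.range (M+1),
        α k * ((-1 : ℂ)^k * iteratedDeriv k (Qt σ lam φ) 0) = 0) :
    Complex.I * σ = (M : ℂ) + 1 := by
  set A : ℂ := Complex.I * σ + 1 with hA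
  set φ : ℝ → ℂ := fun v : ℝ => ((X:ℂ[X])^(M+1)).eval (v:ℂ) with hφ
  have hφs : ContDiff ℝ (⊤ : ℕ∞) φ := contDiff_evalReal _
  have key : Qt σ lam φ = fun v : ℝ => (Qpoly A lam M).eval (v:ℂ) := by
    funext v
    have g2 : (fun w : ℝ => (-(w:ℂ) + 2*(w:ℂ)^2 - (w:ℂ)^3) * φ w)
        = fun w : ℝ => ((-X^(M+2) + C (2:ℂ) * X^(M+3) - X^(M+4)).eval (w:ℂ)) := by
      funext w; simp [hφ]; ring
    have g1 : (fun w : ℝ =>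
          (-(Complex.I*σ+1) + 2*(Complex.I*σ+2)*(w:ℂ) - (Complex.I*σ+3)*(w:ℂ)^2) * φ w)
        = fun w : ℝ => ((C (-A) * X^(M+1) + C (2*(A+1)) * X^(M+2)
            + C (-(A+2)) * X^(M+3)).eval (w:ℂ)) := by
      funext w; simp [hφ, hA]; ring
    have g0 : ((Complex.I*σ+1) + (lam:ℂ) - (Complex.I*σ+1)*(v:ℂ)) * φ v
        = ((C (A + lam) * X^(M+1) + C (-A) * X^(M+2)).eval (v:ℂ)) := by
      simp [hφ, hA]; ring
    rw [Qt, g2, g1, g0, deriv_evalReal, deriv_evalReal, deriv_evalReal]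
    simp [Qpoly]
  have h := hQ φ hφs
  rw [key] at h
  have h2 : ∀ k : ℕ, iteratedDeriv k (fun v : ℝ => (Qpoly A lam M).eval (v:ℂ)) 0
      = (derivative^[k] (Qpoly A lam M)).eval 0 := by
    intro k; rw [iteratedDeriv_evalReal]; norm_num
  simp only [h2] at h
  rw [Finset.sum_eq_single_of_mem M (Finset.self_mem_range_succ M)] at h
  · rw [eval_iter_Qpoly A lam M M le_rfl, if_pos rfl] at h
    have hne : (-(((M+2).factorial : ℂ)) + A * ((M+1).factorial : ℂ)) = 0 := by
      rcases mul_eq_zero.mp h with h' | h'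
      · exact absurd h' hαM
      · rcases mul_eq_zero.mp h' with h'' | h''
        · exact absurd h'' (pow_ne_zero _ (by norm_num))
        · exact h''
    have hfac : ((M+1).factorial : ℂ) ≠ 0 := by
      exact_mod_cast Nat.factorial_ne_zero (M+1)
    have e : ((M+2).factorial : ℂ) = ((M:ℂ)+2) * ((M+1).factorial : ℂ) := by
      rw [show M + 2 = (M+1) + 1 from rfl, Nat.factorial_succ]
      push_cast; ring
    have hmul : A * ((M+1).factorial : ℂ) = ((M:ℂ)+2) * ((M+1).factorial : ℂ) := by
      linear_combination hne + e
    have hA2 : A = (M:ℂ) + 2 := mul_right_cancel₀ hfac hmul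
    rw [hA] at hA2
    linear_combination hA2
  · intro k hk hkM
    have hkM' := Finset.mem_range.mp hk
    rw [eval_iter_Qpoly A lam M k (by omega), if_neg hkM]
    ring
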